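/- arXiv:1409.6476 — 5 statements merged into one kernel-verified Lean document; each statement's English description precedes it below -/
import Mathlib

section
/- If a sequence (x_n) in a Banach space X is (p,r)-null, then (x_n) is relatively (p,r)-compact, i.e., there exists (y_k) ∈ ℓ_p(X) such that x_n ∈ (p,r)-conv(y_k) for all n. -/
/-! Applying `(p,r)`-nullity with `ε = 1` puts all but finitely many `xₙ` into
`(p,r)-conv(z)` for some `z ∈ ℓ_p(X)`. Prepending the finitely many remaining `xₙ` to `z`
keeps it in `ℓ_p(X)`; each prepended `xₙ` is a term of the new sequence, hence in its hull
(coefficient `1` at its position), and the hull of a subsequence lies in the hull of the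
sequence (extend the coefficients by zero). -/

open Filter Topology Pointwise

noncomputable section

variable {X : Type*} [NormedAddCommGroup X] [NormedSpace ℝ X]

/-- The `(p,r)`-convex hull of a sequence `z`: all sums `∑ aₖ • zₖ` with `(aₖ)` in the
closed unit ball of `ℓ_r`. -/
def prConv (r : ℝ) (z : ℕ → X) : Set X :=
  {x | ∃ a : ℕ → ℝ, Summable (fun k => |a k| ^ r) ∧ (∑' k, |a k| ^ r) ≤ 1 ∧
    HasSum (fun k => a k • z k) x}

/-- `z` is absolutely `p`-summable. -/
def MemLpSeq (p : ℝ) (z : ℕ → X) : Prop := Summable fun k => ‖z k‖ ^ p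

/-- The `ℓ_p(X)` norm of a sequence. -/
def lpNorm (p : ℝ) (z : ℕ → X) : ℝ := (∑' k, ‖z k‖ ^ p) ^ (1 / p)

/-- `x` is a `(p,r)`-null sequence. -/
def IsPRNull (p r : ℝ) (x : ℕ → X) : Prop :=
  ∀ ε > 0, ∃ z : ℕ → X, MemLpSeq p z ∧ lpNorm p z ≤ ε ∧
    ∃ N : ℕ, ∀ n ≥ N, x n ∈ prConv r z

/-- `z` is weakly `p`-summable with weak `ℓ_p` norm at most `C`. -/
def WeakLpBound (p : ℝ) (z : ℕ → X) (C : ℝ) : Prop :=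
  ∀ f : X →L[ℝ] ℝ, ‖f‖ ≤ 1 →
    Summable (fun k => |f (z k)| ^ p) ∧ (∑' k, |f (z k)| ^ p) ≤ C ^ p

/-- `z` is weakly `p`-summable. -/
def MemWeakLpSeq (p : ℝ) (z : ℕ → X) : Prop := ∃ C, 0 ≤ C ∧ WeakLpBound p z C

/-- `z` is unconditionally `p`-summable: weakly `p`-summable with tails tending to `0`
in the weak `ℓ_p` norm. -/
def MemUncondLpSeq (p : ℝ) (z : ℕ → X) : Prop :=
  MemWeakLpSeq p z ∧ ∀ ε > 0, ∃ N : ℕ, WeakLpBound p (fun k => z (k + N)) ε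

open Function

-- `r ≠ 0` is needed because `|0| ^ (0 : ℝ) = 1`, so zero coefficients would not be free.
theorem mem_prConv_self {r : ℝ} (hr : r ≠ 0) (z : ℕ → X) (k : ℕ) : z k ∈ prConv r z := by
  classical
  have hpow : (fun j => |(Pi.single k 1 : ℕ → ℝ) j| ^ r) = (Pi.single k 1 : ℕ → ℝ) := by
    ext j
    rcases eq_or_ne j k with rfl | hj
    · simp
    · simp [hj, Real.zero_rpow hr]
  refine ⟨(Pi.single k 1 : ℕ → ℝ), ?_, ?_, ?_⟩
  · rw [hpow]
    exact (hasSum_pi_single k 1).summable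
  · rw [hpow, tsum_pi_single]
  · convert hasSum_pi_single k (z k) using 1
    ext j
    rcases eq_or_ne j k with rfl | hj
    · simp
    · simp [hj]

theorem prConv_comp_subset {r : ℝ} (hr : r ≠ 0) (z : ℕ → X) {e : ℕ → ℕ} (he : Injective e) :
    prConv r (z ∘ e) ⊆ prConv r z := by
  rintro x ⟨a, ha_summable, ha_le, ha_sum⟩
  have hpow : (fun k => |extend e a 0 k| ^ r) = extend e (fun k => |a k| ^ r) 0 := by
    ext k
    rw [apply_extend (fun t : ℝ => |t| ^ r)]
    simp only [comp_def, Pi.zero_apply, abs_zero, Real.zero_rpow hr]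
    rfl
  have hsmul : (fun k => extend e a 0 k • z k) = extend e (fun k => a k • z (e k)) 0 := by
    ext k
    by_cases hk : ∃ j, e j = k
    · obtain ⟨j, rfl⟩ := hk
      simp [he.extend_apply]
    · simp [extend_apply' _ _ _ hk]
  refine ⟨extend e a 0, ?_, ?_, ?_⟩
  · rwa [hpow, summable_extend_zero he]
  · rwa [hpow, tsum_extend_zero he]
  · rwa [hsmul, hasSum_extend_zero he]

theorem prNull_relatively_prCompact_general (p r : ℝ) (hr : 1 ≤ r) (x : ℕ → X) (hx : IsPRNull p r x) :
    ∃ y : ℕ → X, MemLpSeq p y ∧ ∀ n, x n ∈ prConv r y := by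
  have hr0 : r ≠ 0 := by positivity
  obtain ⟨z, hz, -, N, hN⟩ := hx 1 one_pos
  let y : ℕ → X := fun k => if k < N then x k else z (k - N)
  have hy_shift : y ∘ (· + N) = z := by ext k; simp [y]
  have hy : MemLpSeq p y :=
    (summable_nat_add_iff (f := fun k => ‖y k‖ ^ p) N).mp (hy_shift ▸ hz : MemLpSeq p (y ∘ (· + N)))
  refine ⟨y, hy, fun n => ?_⟩
  rcases lt_or_ge n N with hn | hn
  · simpa [y, hn] using mem_prConv_self hr0 y n
  · exact prConv_comp_subset hr0 y (add_left_injective N) (hy_shift ▸ hN n hn)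

/-- A `(p,r)`-null sequence is relatively `(p,r)`-compact: it is contained in a single
`(p,r)`-convex hull of some `y ∈ ℓ_p(X)`. -/
theorem prNull_relatively_prCompact [CompleteSpace X] (p r : ℝ) (hp : 1 ≤ p) (hr : 1 ≤ r)
    (hpr : 1 ≤ 1 / p + 1 / r) (x : ℕ → X) (hx : IsPRNull p r x) :
    ∃ y : ℕ → X, MemLpSeq p y ∧ ∀ n, x n ∈ prConv r y :=
  prNull_relatively_prCompact_general p r hr x hx
end
end

section
/- A subset K of a Banach space X is relatively compact if and only if there exists a null sequence (x_n) in X such that K is contained in the closed absolutely convex hull of {x_n : n ∈ ℕ}, i.e., K ⊂ { Σ_n a_n x_n : Σ_n |a_n| ≤ 1 }. -/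
/-!
If `(xₙ)` is null, its range is totally bounded, hence so is its absolutely convex hull, whose
closure is therefore compact in the complete space `X`. Every combination `∑ aₙ xₙ` with
`∑ |aₙ| ≤ 1` is a limit of finite such combinations, so it lies in that closed hull.

Conversely, let `C` be compact, inside the ball of radius `R`, and pick finite-valued
approximations `pₙ` on `C` with `‖y - pₙ y‖ < R 4⁻ⁿ` and `p₀ = 0`. Each `y ∈ C` is the telescoping
sum `∑ (pₙ₊₁ y - pₙ y)`, whose `n`-th term ranges over a finite set of vectors of norm `O(4⁻ⁿ)`.
Multiplied by `2ⁿ⁺¹`, all these vectors form a null family, and `y` is its combination with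
weights `2⁻⁽ⁿ⁺¹⁾`, which sum to `1`.
-/

open Filter Topology Pointwise

noncomputable section

variable {X : Type*} [NormedAddCommGroup X] [NormedSpace ℝ X]

open Set Function

section Hull

variable {ι E : Type*}

def l1Hull [TopologicalSpace E] [AddCommMonoid E] [Module ℝ E] (x : ι → E) : Set E :=
  {y | ∃ a : ι → ℝ, Summable (fun i => |a i|) ∧ (∑' i, |a i|) ≤ 1 ∧ HasSum (fun i => a i • x i) y}

theorem AbsConvex.sum_smul_mem_smul [AddCommGroup E] [Module ℝ E] {A : Set E}
    (hA : AbsConvex ℝ A) (hA₀ : A.Nonempty) (s : Finset ι) (a : ι → ℝ) {p : ι → E}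
    (hp : ∀ i ∈ s, p i ∈ A) : ∑ i ∈ s, a i • p i ∈ (∑ i ∈ s, |a i|) • A := by
  classical
  induction s using Finset.induction_on with
  | empty => simp [zero_smul_set hA₀]
  | insert j s hj ih =>
    rw [Finset.sum_insert hj, Finset.sum_insert hj,
      hA.2.add_smul (abs_nonneg _) (Finset.sum_nonneg fun i _ => abs_nonneg _)]
    refine add_mem_add ?_ (ih fun i hi => hp i (Finset.mem_insert_of_mem hi))
    rw [hA.1.smul_congr (b := a j) (by simp)]
    exact smul_mem_smul_set (hp j (Finset.mem_insert_self j s))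

theorem AbsConvex.sum_smul_mem [AddCommGroup E] [Module ℝ E] {A : Set E}
    (hA : AbsConvex ℝ A) (hA₀ : A.Nonempty) {s : Finset ι} {a : ι → ℝ} {p : ι → E}
    (hp : ∀ i ∈ s, p i ∈ A) (ha : ∑ i ∈ s, |a i| ≤ 1) : ∑ i ∈ s, a i • p i ∈ A := by
  have hmono : (∑ i ∈ s, |a i|) • A ⊆ (1 : ℝ) • A :=
    hA.1.smul_mono (by simpa [abs_of_nonneg (Finset.sum_nonneg fun i _ => abs_nonneg (a i))])
  simpa using hmono (hA.sum_smul_mem_smul hA₀ s a hp)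

theorem l1Hull_subset_closedAbsConvexHull [Nonempty ι] [TopologicalSpace E] [AddCommGroup E]
    [Module ℝ E] (x : ι → E) : l1Hull x ⊆ closedAbsConvexHull ℝ (range x) := by
  rintro y ⟨a, ha, ha₁, hy⟩
  refine isClosed_closedAbsConvexHull.mem_of_tendsto hy (Eventually.of_forall fun s => ?_)
  exact absConvex_convexClosedHull.sum_smul_mem ((range_nonempty x).mono subset_closedAbsConvexHull)
    (fun i _ => subset_closedAbsConvexHull (mem_range_self i))
    ((ha.sum_le_tsum s fun i _ => abs_nonneg (a i)).trans ha₁)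

end Hull

section Reindex

variable {ι κ E : Type*} [TopologicalSpace E] [AddCommMonoid E] [Module ℝ E]

theorem l1Hull_comp_subset (x : ι → E) {j : κ → ι} (hj : Injective j) :
    l1Hull (x ∘ j) ⊆ l1Hull x := by
  rintro y ⟨a, ha, ha₁, hy⟩
  have hoff : ∀ i ∉ range j, extend j a 0 i = 0 := fun i hi => extend_apply' _ _ _ hi
  have habs : HasSum (fun i => |extend j a 0 i|) (∑' k, |a k|) :=
    (hj.hasSum_iff fun i hi => by simp [hoff i hi]).1
      (by simpa [comp_def, hj.extend_apply] using ha.hasSum)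
  refine ⟨extend j a 0, habs.summable, habs.tsum_eq ▸ ha₁,
    (hj.hasSum_iff fun i hi => by simp [hoff i hi]).1 ?_⟩
  simpa [comp_def, hj.extend_apply] using hy

theorem exists_tendsto_atTop_l1Hull_superset [Countable ι] {x : ι → E}
    (hx : Tendsto x cofinite (𝓝 0)) :
    ∃ x' : ℕ → E, Tendsto x' atTop (𝓝 0) ∧ l1Hull x ⊆ l1Hull x' := by
  obtain ⟨e, he⟩ := exists_injective_nat ι
  refine ⟨extend e x 0, ?_,
    by simpa only [extend_comp he] using l1Hull_comp_subset (extend e x 0) he⟩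
  rw [← Nat.cofinite_eq_atTop]
  intro U hU
  refine ((hx hU).image e).subset fun m hm => ?_
  by_cases hme : m ∈ range e
  · obtain ⟨i, rfl⟩ := hme
    exact mem_image_of_mem e (by simpa [he.extend_apply] using hm)
  · exact absurd (by simpa [extend_apply' _ _ _ hme] using mem_of_mem_nhds hU) hm

theorem mem_l1Hull_sigma_of_hasSum {G : ℕ → Set E} {w : ℕ → ℝ} (hw : ∀ n, 0 < w n)
    (hws : Summable w) (hw₁ : ∑' n, w n ≤ 1) {u : ℕ → E} (hu : ∀ n, u n ∈ G n) {y : E}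
    (hy : HasSum u y) : y ∈ l1Hull fun i : Σ n, G n => (w i.1)⁻¹ • (i.2 : E) := by
  have hj : Injective fun n => (⟨n, u n, hu n⟩ : Σ n, G n) := fun m n h => congrArg Sigma.fst h
  have hw_abs : (fun n => |w n|) = w := funext fun n => abs_of_pos (hw n)
  refine l1Hull_comp_subset _ hj ⟨w, by rwa [hw_abs], by rwa [hw_abs], ?_⟩
  simpa [comp_def, smul_smul, (hw _).ne'] using hy

end Reindex

theorem tendsto_sigma_fst_cofinite_atTop {κ : ℕ → Type*} [∀ n, Finite (κ n)] :
    Tendsto (Sigma.fst : (Σ n, κ n) → ℕ) cofinite atTop := by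
  rw [← Nat.cofinite_eq_atTop]
  exact Tendsto.cofinite_of_finite_preimage_singleton fun n => by
    rw [← range_sigmaMk]; infer_instance

theorem hasSum_succ_sub_of_tendsto {E : Type*} [SeminormedAddCommGroup E] {p : ℕ → E} {y : E}
    (hs : Summable fun n => ‖p (n + 1) - p n‖) (hp : Tendsto p atTop (𝓝 y)) :
    HasSum (fun n => p (n + 1) - p n) (y - p 0) := by
  rw [hasSum_iff_tendsto_nat_of_summable_norm hs]
  simp_rw [Finset.sum_range_sub]
  exact hp.sub_const (p 0)

theorem IsCompact.exists_finite_image_dist_lt {α : Type*} [PseudoMetricSpace α] {C : Set α}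
    (hC : IsCompact C) {ε : ℝ} (hε : 0 < ε) :
    ∃ q : α → α, (q '' C).Finite ∧ ∀ y ∈ C, dist y (q y) < ε := by
  obtain ⟨t, -, ht, hCt⟩ := finite_cover_balls_of_compact hC hε
  have : ∀ y, ∃ z, y ∈ C → z ∈ t ∧ dist y z < ε := fun y => by
    by_cases hy : y ∈ C
    · obtain ⟨z, hz, hyz⟩ := mem_iUnion₂.1 (hCt hy)
      exact ⟨z, fun _ => ⟨hz, hyz⟩⟩
    · exact ⟨y, fun h => absurd h hy⟩
  choose q hq using this
  exact ⟨q, ht.subset (image_subset_iff.2 fun y hy => (hq y hy).1), fun y hy => (hq y hy).2⟩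

section Normed

variable {E : Type*} [SeminormedAddCommGroup E] {C : Set E}

theorem IsCompact.exists_seq_finite_image_approx (hC : IsCompact C) {ε : ℕ → ℝ}
    (hε : ∀ n, 0 < ε n) (hC₀ : ∀ y ∈ C, ‖y‖ < ε 0) :
    ∃ p : ℕ → E → E, p 0 = 0 ∧ (∀ n, (p n '' C).Finite) ∧ ∀ n, ∀ y ∈ C, ‖y - p n y‖ < ε n := by
  choose q hqfin hq using fun n => hC.exists_finite_image_dist_lt (hε n)
  refine ⟨fun | 0 => 0 | n + 1 => q (n + 1), rfl, fun n => ?_, fun n y hy => ?_⟩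
  · cases n with
    | zero => exact (finite_singleton 0).subset (by rintro _ ⟨_, _, rfl⟩; rfl)
    | succ n => exact hqfin _
  · cases n with
    | zero => simpa using hC₀ y hy
    | succ n => simpa [dist_eq_norm] using hq _ y hy

theorem IsCompact.exists_finite_hasSum (hC : IsCompact C) {ε : ℕ → ℝ} (hε : ∀ n, 0 < ε n)
    (hεs : Summable ε) (hC₀ : ∀ y ∈ C, ‖y‖ < ε 0) :
    ∃ G : ℕ → Set E, (∀ n, (G n).Finite) ∧ (∀ n, ∀ g ∈ G n, ‖g‖ ≤ ε (n + 1) + ε n) ∧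
      ∀ y ∈ C, ∃ u : ℕ → E, (∀ n, u n ∈ G n) ∧ HasSum u y := by
  obtain ⟨p, hp₀, hpfin, hp⟩ := hC.exists_seq_finite_image_approx hε hC₀
  have hstep : ∀ n, ∀ y ∈ C, ‖p (n + 1) y - p n y‖ ≤ ε (n + 1) + ε n := fun n y hy =>
    calc ‖p (n + 1) y - p n y‖ ≤ ‖p (n + 1) y - y‖ + ‖y - p n y‖ :=
          norm_sub_le_norm_sub_add_norm_sub _ _ _
      _ ≤ ε (n + 1) + ε n := by
          rw [norm_sub_rev]; exact add_le_add (hp _ y hy).le (hp n y hy).le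
  refine ⟨fun n => (fun y => p (n + 1) y - p n y) '' C,
    fun n => ((hpfin (n + 1)).sub (hpfin n)).subset ?_, ?_,
    fun y hy => ⟨fun n => p (n + 1) y - p n y, fun n => mem_image_of_mem _ hy, ?_⟩⟩
  · rintro _ ⟨y, hy, rfl⟩
    exact sub_mem_sub (mem_image_of_mem _ hy) (mem_image_of_mem _ hy)
  · rintro n _ ⟨y, hy, rfl⟩
    exact hstep n y hy
  · have hlim : Tendsto (fun n => p n y) atTop (𝓝 y) := by
      rw [tendsto_iff_norm_sub_tendsto_zero]
      exact squeeze_zero (fun _ => norm_nonneg _)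
        (fun n => by rw [norm_sub_rev]; exact (hp n y hy).le) hεs.tendsto_atTop_zero
    have hs : Summable fun n => ‖p (n + 1) y - p n y‖ :=
      .of_nonneg_of_le (fun _ => norm_nonneg _) (fun n => hstep n y hy)
        (((summable_nat_add_iff 1).2 hεs).add hεs)
    have := hasSum_succ_sub_of_tendsto (p := fun n => p n y) hs hlim
    rwa [hp₀, Pi.zero_apply, sub_zero] at this

end Normed

theorem IsCompact.exists_tendsto_atTop_subset_l1Hull {E : Type*} [SeminormedAddCommGroup E]
    [NormedSpace ℝ E] {C : Set E} (hC : IsCompact C) :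
    ∃ x : ℕ → E, Tendsto x atTop (𝓝 0) ∧ C ⊆ l1Hull x := by
  obtain ⟨R, hR, hCR⟩ := hC.isBounded.exists_pos_norm_lt
  set w : ℕ → ℝ := fun n => (1 / 2) ^ (n + 1)
  set ε : ℕ → ℝ := fun n => R * (1 / 4) ^ n
  have hw : ∀ n, 0 < w n := fun n => by positivity
  have hw₁ : HasSum w 1 := by
    simpa [w, pow_succ, div_eq_mul_inv, mul_comm] using hasSum_geometric_two' 1
  have hεs : Summable ε := (summable_geometric_of_lt_one (by norm_num) (by norm_num)).mul_left R
  obtain ⟨G, hGfin, hGnorm, hCG⟩ :=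
    hC.exists_finite_hasSum (fun n => by positivity) hεs (by simpa [ε] using hCR)
  have : ∀ n, Finite (G n) := fun n => (hGfin n).to_subtype
  have hη : Tendsto (fun n => (w n)⁻¹ * (ε (n + 1) + ε n)) atTop (𝓝 0) := by
    have hratio : (fun n => (w n)⁻¹ * (ε (n + 1) + ε n)) = fun n => 5 / 2 * R * (1 / 2) ^ n := by
      funext n
      simp only [w, ε, show (1 / 4 : ℝ) = 1 / 2 * (1 / 2) by norm_num, mul_pow]
      field_simp
      ring
    rw [hratio]
    simpa using (tendsto_pow_atTop_nhds_zero_of_lt_one (by norm_num : (0 : ℝ) ≤ 1 / 2)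
      (by norm_num)).const_mul (5 / 2 * R)
  have hnull : Tendsto (fun i : Σ n, G n => (w i.1)⁻¹ • (i.2 : E)) cofinite (𝓝 0) := by
    refine squeeze_zero_norm (fun i => ?_) (hη.comp tendsto_sigma_fst_cofinite_atTop)
    rw [norm_smul, norm_inv, Real.norm_of_nonneg (hw _).le]
    exact mul_le_mul_of_nonneg_left (hGnorm _ _ i.2.2) (inv_nonneg.2 (hw _).le)
  obtain ⟨x, hx, hsub⟩ := exists_tendsto_atTop_l1Hull_superset hnull
  refine ⟨x, hx, fun y hy => hsub ?_⟩
  obtain ⟨u, hu, huy⟩ := hCG y hy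
  exact mem_l1Hull_sigma_of_hasSum hw hw₁.summable hw₁.tsum_eq.le hu huy

/-- Grothendieck's compactness criterion: `K` is relatively compact iff it is contained in
the closed absolutely convex hull `{Σ aₙ • xₙ : Σ |aₙ| ≤ 1}` of a null sequence `(xₙ)`. -/
theorem grothendieck_compactness [CompleteSpace X] (K : Set X) :
    IsCompact (closure K) ↔ ∃ x : ℕ → X, Tendsto x atTop (nhds 0) ∧
      K ⊆ {y | ∃ a : ℕ → ℝ, Summable (fun n => |a n|) ∧ (∑' n, |a n|) ≤ 1 ∧
        HasSum (fun n => a n • x n) y} := by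
  refine ⟨fun hK => ?_, fun ⟨x, hx, hKx⟩ => ?_⟩
  · obtain ⟨x, hx, hKx⟩ := hK.exists_tendsto_atTop_subset_l1Hull
    exact ⟨x, hx, subset_closure.trans hKx⟩
  · have hcompact : IsCompact (closedAbsConvexHull ℝ (range x)) :=
      isCompact_closedAbsConvexHull_of_totallyBounded hx.cauchySeq.totallyBounded_range
    exact hcompact.of_isClosed_subset isClosed_closure <|
      closure_minimal (hKx.trans (l1Hull_subset_closedAbsConvexHull x))
        isClosed_closedAbsConvexHull
end
end

section
/- A sequence (x_n) in a Banach space X is (p,r)-null if and only if for every ε > 0 there exist (z_k) ∈ ℓ_p(X) and N ∈ ℕ such that ‖x_n‖ ≤ ε and x_n ∈ (p,r)-conv(z_k) for all n ≥ N. -/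
open Filter Topology Pointwise

noncomputable section

variable {X : Type*} [NormedAddCommGroup X] [NormedSpace ℝ X]

/-!
Hölder's inequality gives `‖∑ aₖ zₖ‖ ≤ ‖z‖_p` for `a` in the unit ball of `ℓ_r` (this is where
`r ≤ p*` enters), so a `(p,r)`-null sequence is null. Conversely, let `xₙ → 0` with
`xₙ ∈ (p,r)-conv(z)` eventually. The unit ball of `ℓ_r` is compact for coordinatewise convergence
and `a ↦ ∑ aₖ zₖ` is continuous on it, so the coefficients of far-out `xₙ` are close, on any finite
set of coordinates, to a representation of `0`. Subtracting it represents `xₙ` with coefficients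
of `ℓ_r` norm `≤ 2` whose first `M` entries are tiny. Multiplying the first `M` vectors `zₖ` by a
small `s` and the others by `4` then gives a sequence of `ℓ_p` norm `≤ ε` whose `(p,r)`-convex hull
still contains `xₙ`.
-/

-- `c` bounds `∑ |aₖ| ^ r`, not the norm: `lrBall r c` is the `ℓ_r` ball of radius `c ^ (1 / r)`.
def lrBall (r c : ℝ) : Set (ℕ → ℝ) :=
  {a | Summable (fun k => |a k| ^ r) ∧ ∑' k, |a k| ^ r ≤ c}

lemma mem_prConv_iff {r : ℝ} {z : ℕ → X} {x : X} :
    x ∈ prConv r z ↔ ∃ a ∈ lrBall r 1, HasSum (fun k => a k • z k) x := by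
  simp only [prConv, lrBall, Set.mem_ofPred_eq, and_assoc]

section lrBall

variable {r c : ℝ} {a b : ℕ → ℝ}

lemma abs_le_one_of_mem_lrBall (hr : 0 < r) (ha : a ∈ lrBall r 1) (k : ℕ) : |a k| ≤ 1 := by
  have hk : |a k| ^ r ≤ 1 := (ha.1.le_tsum k fun j _ => by positivity).trans ha.2
  exact le_of_not_gt fun h => (Real.one_lt_rpow h hr).not_ge hk

lemma nat_add_mem_lrBall (ha : a ∈ lrBall r c) (M : ℕ) : (fun k => a (k + M)) ∈ lrBall r c :=
  ⟨(summable_nat_add_iff M).2 ha.1,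
    (tsum_comp_le_tsum_of_inj ha.1 (fun _ => by positivity) (add_left_injective M)).trans ha.2⟩

lemma abs_sub_rpow_le (hr : 1 ≤ r) (u v : ℝ) :
    |u - v| ^ r ≤ 2 ^ (r - 1) * (|u| ^ r + |v| ^ r) :=
  calc |u - v| ^ r ≤ (|u| + |v|) ^ r :=
        Real.rpow_le_rpow (abs_nonneg _) (abs_sub _ _) (by linarith)
    _ ≤ 2 ^ (r - 1) * (|u| ^ r + |v| ^ r) := by
        exact_mod_cast NNReal.rpow_add_le_mul_rpow_add_rpow ⟨|u|, abs_nonneg u⟩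
          ⟨|v|, abs_nonneg v⟩ hr

lemma sub_mem_lrBall {d : ℝ} (hr : 1 ≤ r) (ha : a ∈ lrBall r c) (hb : b ∈ lrBall r d) :
    a - b ∈ lrBall r (2 ^ (r - 1) * (c + d)) := by
  have hdom : Summable fun k => 2 ^ (r - 1) * (|a k| ^ r + |b k| ^ r) :=
    (ha.1.add hb.1).mul_left _
  have hsub : Summable fun k => |(a - b) k| ^ r :=
    hdom.of_nonneg_of_le (fun _ => by positivity) fun k => abs_sub_rpow_le hr _ _
  refine ⟨hsub, ?_⟩
  calc ∑' k, |(a - b) k| ^ r ≤ ∑' k, 2 ^ (r - 1) * (|a k| ^ r + |b k| ^ r) :=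
        hsub.tsum_le_tsum (fun k => abs_sub_rpow_le hr _ _) hdom
    _ = 2 ^ (r - 1) * (∑' k, |a k| ^ r + ∑' k, |b k| ^ r) := by
        rw [tsum_mul_left, ha.1.tsum_add hb.1]
    _ ≤ 2 ^ (r - 1) * (c + d) := by gcongr; exacts [ha.2, hb.2]

lemma isCompact_lrBall_one (hr : 0 < r) : IsCompact (lrBall r 1) := by
  have hfinite : lrBall r 1 = ⋂ s : Finset ℕ, {a | ∑ k ∈ s, |a k| ^ r ≤ 1} := by
    ext a
    simp only [Set.mem_iInter, Set.mem_ofPred_eq]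
    refine ⟨fun ha s => (ha.1.sum_le_tsum s fun k _ => by positivity).trans ha.2, fun h => ?_⟩
    have hs : Summable fun k => |a k| ^ r := summable_of_sum_le (fun k => by positivity) h
    exact ⟨hs, hs.tsum_le_of_sum_le h⟩
  refine (isCompact_univ_pi fun _ => isCompact_Icc (a := (-1 : ℝ)) (b := 1)).of_isClosed_subset
    ?_ fun a ha => Set.mem_univ_pi.2 fun k => abs_le.1 (abs_le_one_of_mem_lrBall hr ha k)
  rw [hfinite]
  exact isClosed_iInter fun s => isClosed_le (by fun_prop (disch := positivity)) continuous_const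

end lrBall

lemma mul_le_young_of_le_one {p r a t : ℝ} (hp : 1 ≤ p) (hr : 0 < r) (hpr : 1 ≤ 1 / p + 1 / r)
    (ha₀ : 0 ≤ a) (ha₁ : a ≤ 1) (ht : 0 ≤ t) :
    a * t ≤ (1 - 1 / p) * a ^ r + 1 / p * t ^ p := by
  have hp₀ : 0 < p := one_pos.trans_le hp
  have hw : 0 ≤ 1 - 1 / p := sub_nonneg.2 ((div_le_one hp₀).2 hp)
  -- `r ≤ p*` says exactly that the exponent `r (1 - 1/p)` is at most `1`
  have hexp : r * (1 - 1 / p) ≤ 1 := by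
    have := mul_le_mul_of_nonneg_left (show 1 - 1 / p ≤ 1 / r by linarith) hr.le
    rwa [mul_one_div_cancel hr.ne'] at this
  have ha : a ≤ (a ^ r) ^ (1 - 1 / p) := by
    rw [← Real.rpow_mul ha₀]
    calc a = a ^ (1 : ℝ) := (Real.rpow_one a).symm
      _ ≤ a ^ (r * (1 - 1 / p)) :=
        Real.rpow_le_rpow_of_exponent_ge' ha₀ ha₁ (mul_nonneg hr.le hw) hexp
  calc a * t ≤ (a ^ r) ^ (1 - 1 / p) * (t ^ p) ^ (1 / p) := by
        rw [← Real.rpow_mul ht, mul_one_div_cancel hp₀.ne', Real.rpow_one]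
        exact mul_le_mul_of_nonneg_right ha ht
    _ ≤ (1 - 1 / p) * a ^ r + 1 / p * t ^ p :=
        Real.geom_mean_le_arith_mean2_weighted hw (by positivity) (by positivity)
          (by positivity) (by ring)

lemma summable_abs_mul_and_tsum_le_of_mem_lrBall {p r : ℝ} {a t : ℕ → ℝ} (hp : 1 ≤ p)
    (hr : 0 < r) (hpr : 1 ≤ 1 / p + 1 / r) (ha : a ∈ lrBall r 1) (ht : ∀ k, 0 ≤ t k)
    (htp : Summable fun k => t k ^ p) :
    Summable (fun k => |a k| * t k) ∧ ∑' k, |a k| * t k ≤ (∑' k, t k ^ p) ^ (1 / p) := by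
  have hp₀ : 0 < p := one_pos.trans_le hp
  set T := ∑' k, t k ^ p
  set S := T ^ (1 / p)
  have hT : 0 ≤ T := tsum_nonneg fun k => Real.rpow_nonneg (ht k) p
  rcases hT.eq_or_lt with hT0 | hTpos
  · have ht0 : ∀ k, t k = 0 := fun k =>
      (Real.rpow_eq_zero (ht k) hp₀.ne').1 <|
        le_antisymm (hT0 ▸ htp.le_tsum k fun j _ => Real.rpow_nonneg (ht j) p)
          (Real.rpow_nonneg (ht k) p)
    simp only [ht0, mul_zero, tsum_zero, summable_zero, true_and]
    exact Real.rpow_nonneg hT _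
  have hS : 0 < S := Real.rpow_pos_of_pos hTpos _
  have hST : S ^ p = T := by
    rw [← Real.rpow_mul hT, one_div_mul_cancel hp₀.ne', Real.rpow_one]
  -- Young's inequality applied to `|aₖ|` and `tₖ / S`
  have hyoung : ∀ k, |a k| * t k ≤ S * ((1 - 1 / p) * |a k| ^ r + 1 / p * (t k ^ p / T)) := by
    intro k
    have hk := mul_le_young_of_le_one hp hr hpr (abs_nonneg (a k))
      (abs_le_one_of_mem_lrBall hr ha k) (div_nonneg (ht k) hS.le)
    rw [Real.div_rpow (ht k) hS.le, hST] at hk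
    calc |a k| * t k = S * (|a k| * (t k / S)) := by field_simp
      _ ≤ _ := mul_le_mul_of_nonneg_left hk hS.le
  have hdom : Summable fun k => S * ((1 - 1 / p) * |a k| ^ r + 1 / p * (t k ^ p / T)) :=
    ((ha.1.mul_left _).add ((htp.div_const T).mul_left _)).mul_left S
  have hsum : Summable fun k => |a k| * t k :=
    hdom.of_nonneg_of_le (fun k => mul_nonneg (abs_nonneg _) (ht k)) hyoung
  refine ⟨hsum, ?_⟩
  calc ∑' k, |a k| * t k
      ≤ ∑' k, S * ((1 - 1 / p) * |a k| ^ r + 1 / p * (t k ^ p / T)) :=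
        hsum.tsum_le_tsum hyoung hdom
    _ = S * ((1 - 1 / p) * ∑' k, |a k| ^ r + 1 / p * (T / T)) := by
        rw [tsum_mul_left, (ha.1.mul_left _).tsum_add ((htp.div_const T).mul_left _),
          tsum_mul_left, tsum_mul_left, tsum_div_const]
    _ ≤ S * ((1 - 1 / p) * 1 + 1 / p * 1) := by
        rw [div_self hTpos.ne']
        gcongr
        · exact sub_nonneg.2 ((div_le_one hp₀).2 hp)
        · exact ha.2
    _ = S := by ring

section Holder

variable {p r : ℝ} {z : ℕ → X} {a : ℕ → ℝ}

lemma summable_norm_smul_and_tsum_le_lpNorm (hp : 1 ≤ p) (hr : 0 < r)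
    (hpr : 1 ≤ 1 / p + 1 / r) (hz : MemLpSeq p z) (ha : a ∈ lrBall r 1) :
    Summable (fun k => ‖a k • z k‖) ∧ ∑' k, ‖a k • z k‖ ≤ lpNorm p z := by
  simpa only [norm_smul, Real.norm_eq_abs, lpNorm] using
    summable_abs_mul_and_tsum_le_of_mem_lrBall hp hr hpr ha (fun k => norm_nonneg (z k)) hz

lemma summable_smul_of_mem_lrBall [CompleteSpace X] (hp : 1 ≤ p) (hr : 0 < r)
    (hpr : 1 ≤ 1 / p + 1 / r) (hz : MemLpSeq p z) (ha : a ∈ lrBall r 1) :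
    Summable fun k => a k • z k :=
  (summable_norm_smul_and_tsum_le_lpNorm hp hr hpr hz ha).1.of_norm

lemma norm_tsum_smul_le_lpNorm (hp : 1 ≤ p) (hr : 0 < r) (hpr : 1 ≤ 1 / p + 1 / r)
    (hz : MemLpSeq p z) (ha : a ∈ lrBall r 1) : ‖∑' k, a k • z k‖ ≤ lpNorm p z :=
  have h := summable_norm_smul_and_tsum_le_lpNorm hp hr hpr hz ha
  (norm_tsum_le_tsum_norm h.1).trans h.2

lemma norm_le_lpNorm_of_mem_prConv {x : X} (hp : 1 ≤ p) (hr : 0 < r)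
    (hpr : 1 ≤ 1 / p + 1 / r) (hz : MemLpSeq p z) (hx : x ∈ prConv r z) : ‖x‖ ≤ lpNorm p z := by
  obtain ⟨a, ha, hax⟩ := mem_prConv_iff.1 hx
  exact hax.tsum_eq ▸ norm_tsum_smul_le_lpNorm hp hr hpr hz ha

end Holder

section Compactness

variable {p r : ℝ} {z : ℕ → X}

-- By Hölder, the partial sums converge uniformly on the ball.
lemma continuousOn_tsum_smul [CompleteSpace X] (hp : 1 ≤ p) (hr : 0 < r)
    (hpr : 1 ≤ 1 / p + 1 / r) (hz : MemLpSeq p z) :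
    ContinuousOn (fun a : ℕ → ℝ => ∑' k, a k • z k) (lrBall r 1) := by
  have hp' : 0 < 1 / p := one_div_pos.2 (one_pos.trans_le hp)
  have htail : Tendsto (fun M => lpNorm p fun k => z (k + M)) atTop (𝓝 0) := by
    have h := (tendsto_sum_nat_add fun k => ‖z k‖ ^ p).rpow_const (Or.inr hp'.le)
    rwa [Real.zero_rpow hp'.ne'] at h
  refine TendstoUniformlyOn.continuousOn (F := fun M a => ∑ k ∈ Finset.range M, a k • z k)
    (p := atTop) ?_ (Frequently.of_forall fun M => by fun_prop)
  refine Metric.tendstoUniformlyOn_iff.2 fun ε hε => ?_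
  filter_upwards [htail.eventually (gt_mem_nhds hε)] with M hM a ha
  rw [dist_eq_norm, ← (summable_smul_of_mem_lrBall hp hr hpr hz ha).sum_add_tsum_nat_add M,
    add_sub_cancel_left]
  exact (norm_tsum_smul_le_lpNorm hp hr hpr ((summable_nat_add_iff M).2 hz)
    (nat_add_mem_lrBall ha M)).trans_lt hM

lemma eventually_exists_hasSum_head_le [CompleteSpace X] {x : ℕ → X} (hp : 1 ≤ p)
    (hr : 1 ≤ r) (hpr : 1 ≤ 1 / p + 1 / r) (hz : MemLpSeq p z)
    (hx : Tendsto x atTop (𝓝 0)) (hmem : ∀ᶠ n in atTop, x n ∈ prConv r z)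
    {δ : ℝ} (hδ : 0 < δ) (M : ℕ) :
    ∀ᶠ n in atTop, ∃ a ∈ lrBall r (2 ^ r),
      HasSum (fun k => a k • z k) (x n) ∧ ∀ k < M, |a k| ≤ δ := by
  have hr₀ : 0 < r := one_pos.trans_le hr
  by_contra hbad
  obtain ⟨φ, hφ, hφbad⟩ :=
    extraction_of_frequently_atTop ((not_eventually.1 hbad).and_eventually hmem)
  choose a ha hax using fun j => mem_prConv_iff.1 (hφbad j).2
  obtain ⟨L, hL, ψ, hψ, haL⟩ := (isCompact_lrBall_one hr₀).tendsto_subseq ha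
  have hL0 : HasSum (fun k => L k • z k) 0 := by
    have hlim : Tendsto (fun j => x (φ (ψ j))) atTop (𝓝 (∑' k, L k • z k)) := by
      have := (continuousOn_tsum_smul hp hr₀ hpr hz L hL).tendsto.comp
        (tendsto_nhdsWithin_iff.2 ⟨haL, Eventually.of_forall fun j => ha (ψ j)⟩)
      simpa only [Function.comp_def, (hax _).tsum_eq] using this
    rw [← tendsto_nhds_unique hlim (hx.comp (hφ.comp hψ).tendsto_atTop)]
    exact (summable_smul_of_mem_lrBall hp hr₀ hpr hz hL).hasSum
  have hhead : ∀ᶠ j in atTop, ∀ k < M, |a (ψ j) k - L k| ≤ δ := by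
    refine (eventually_all_finite (Set.finite_lt_nat M)).2 fun k _ => ?_
    simpa only [← Real.dist_eq, Function.comp_apply] using
      ((tendsto_pi_nhds.1 haL k).eventually (Metric.closedBall_mem_nhds (L k) hδ))
  obtain ⟨j, hj⟩ := hhead.exists
  refine (hφbad (ψ j)).1 ⟨a (ψ j) - L, ?_, ?_, hj⟩
  · have h := sub_mem_lrBall hr (ha (ψ j)) hL
    rwa [Real.rpow_sub_one two_ne_zero, one_add_one_eq_two, div_mul_cancel₀ _ two_ne_zero] at h
  · simpa only [Pi.sub_apply, sub_smul, sub_zero] using (hax (ψ j)).sub hL0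

end Compactness

section Reweighting

variable {p r : ℝ} {z : ℕ → X}

lemma memLpSeq_smul_and_lpNorm_le {w : ℕ → ℝ} {M : ℕ} {s c ε : ℝ} (hp : 0 < p) (hε : 0 ≤ ε)
    (hz : MemLpSeq p z) (hs : 0 ≤ s) (hhead : ∀ k < M, |w k| ≤ s) (htail : ∀ k, M ≤ k → |w k| ≤ c)
    (hsz : s ^ p * ∑' k, ‖z k‖ ^ p ≤ ε ^ p / 2)
    (hcz : c ^ p * ∑' k, ‖z (k + M)‖ ^ p ≤ ε ^ p / 2) :
    MemLpSeq p (fun k => w k • z k) ∧ lpNorm p (fun k => w k • z k) ≤ ε := by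
  have hnorm : ∀ k, ‖w k • z k‖ ^ p = |w k| ^ p * ‖z k‖ ^ p := fun k => by
    rw [norm_smul, Real.norm_eq_abs, Real.mul_rpow (abs_nonneg _) (norm_nonneg _)]
  have hw : ∀ k, |w k| ≤ max s c := fun k => (lt_or_ge k M).elim
    (fun hk => (hhead k hk).trans (le_max_left s c))
    (fun hk => (htail k hk).trans (le_max_right s c))
  have hwz : MemLpSeq p (fun k => w k • z k) :=
    (hz.mul_left (max s c ^ p)).of_nonneg_of_le (fun k => by positivity) fun k => by
      rw [hnorm]; gcongr; exact hw k
  refine ⟨hwz, ?_⟩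
  have hhead_sum : ∑ k ∈ Finset.range M, ‖w k • z k‖ ^ p ≤ s ^ p * ∑' k, ‖z k‖ ^ p :=
    calc ∑ k ∈ Finset.range M, ‖w k • z k‖ ^ p ≤ ∑ k ∈ Finset.range M, s ^ p * ‖z k‖ ^ p :=
          Finset.sum_le_sum fun k hk => by
            rw [hnorm]; gcongr; exact hhead k (Finset.mem_range.1 hk)
      _ ≤ s ^ p * ∑' k, ‖z k‖ ^ p := by
          rw [← Finset.mul_sum]
          gcongr
          exact hz.sum_le_tsum _ fun k _ => by positivity
  have htail_sum : ∑' k, ‖w (k + M) • z (k + M)‖ ^ p ≤ c ^ p * ∑' k, ‖z (k + M)‖ ^ p := by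
    rw [← tsum_mul_left]
    refine ((summable_nat_add_iff M).2 hwz).tsum_le_tsum (fun k => ?_)
      (((summable_nat_add_iff M).2 hz).mul_left _)
    rw [hnorm]; gcongr; exact htail _ (Nat.le_add_left M k)
  have htot : ∑' k, ‖w k • z k‖ ^ p ≤ ε ^ p := by
    rw [← hwz.sum_add_tsum_nat_add M]
    linarith
  calc lpNorm p (fun k => w k • z k) ≤ (ε ^ p) ^ (1 / p) :=
        Real.rpow_le_rpow (tsum_nonneg fun k => by positivity) htot (by positivity)
    _ = ε := by rw [← Real.rpow_mul hε, mul_one_div_cancel hp.ne', Real.rpow_one]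

lemma div_mem_lrBall_one {a w : ℕ → ℝ} {M : ℕ} (hr : 1 ≤ r) (ha : a ∈ lrBall r (2 ^ r))
    (hhead : ∀ k < M, |a k / w k| ≤ 1 / (2 * (M + 1))) (htail : ∀ k, M ≤ k → w k = 4) :
    (fun k => a k / w k) ∈ lrBall r 1 := by
  have htail' : (fun k => |a (k + M) / w (k + M)| ^ r) = fun k => |a (k + M)| ^ r / 4 ^ r :=
    funext fun k => by
      rw [htail _ (Nat.le_add_left M k), abs_div, abs_of_pos (four_pos : (0 : ℝ) < 4),
        Real.div_rpow (abs_nonneg _) zero_le_four]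
  have hsum : Summable fun k => |a k / w k| ^ r := by
    refine (summable_nat_add_iff M).1 ?_
    rw [htail']
    exact (nat_add_mem_lrBall ha M).1.div_const _
  refine ⟨hsum, ?_⟩
  rw [← hsum.sum_add_tsum_nat_add M, htail', tsum_div_const]
  have hhead_sum : ∑ k ∈ Finset.range M, |a k / w k| ^ r ≤ 1 / 2 :=
    calc ∑ k ∈ Finset.range M, |a k / w k| ^ r ≤ ∑ k ∈ Finset.range M, 1 / (2 * (M + 1) : ℝ) :=
          Finset.sum_le_sum fun k hk => by
            have hk := hhead k (Finset.mem_range.1 hk)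
            refine (Real.rpow_le_self_of_le_one (abs_nonneg _) (hk.trans ?_) hr).trans hk
            rw [div_le_one (by positivity)]
            linarith
      _ ≤ 1 / 2 := by
          rw [Finset.sum_const, Finset.card_range, nsmul_eq_mul, mul_one_div,
            div_le_div_iff₀ (by positivity) two_pos]
          linarith
  have htail_sum : (∑' k, |a (k + M)| ^ r) / 4 ^ r ≤ 1 / 2 :=
    calc (∑' k, |a (k + M)| ^ r) / 4 ^ r ≤ 2 ^ r / 4 ^ r := by
          gcongr; exact (nat_add_mem_lrBall ha M).2
      _ = (1 / 2) ^ r := by rw [← Real.div_rpow zero_le_two zero_le_four]; norm_num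
      _ ≤ 1 / 2 := Real.rpow_le_self_of_le_one (by norm_num) (by norm_num) hr
  linarith

lemma mem_prConv_smul_of_hasSum {x : X} {a w : ℕ → ℝ} (hw : ∀ k, w k ≠ 0)
    (haw : (fun k => a k / w k) ∈ lrBall r 1) (hx : HasSum (fun k => a k • z k) x) :
    x ∈ prConv r (fun k => w k • z k) :=
  mem_prConv_iff.2 ⟨_, haw, by simpa only [smul_smul, div_mul_cancel₀ _ (hw _)] using hx⟩

end Reweighting

theorem isPRNull_of_tendsto_zero [CompleteSpace X] {p r : ℝ} {z x : ℕ → X} (hp : 1 ≤ p)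
    (hr : 1 ≤ r) (hpr : 1 ≤ 1 / p + 1 / r) (hz : MemLpSeq p z) (hx : Tendsto x atTop (𝓝 0))
    (hmem : ∀ᶠ n in atTop, x n ∈ prConv r z) : IsPRNull p r x := by
  have hp₀ : 0 < p := one_pos.trans_le hp
  intro ε hε
  have hεp : 0 < ε ^ p / 2 := by positivity
  -- the new sequence multiplies the tail of `z` by `4` and its first `M` terms by a small `s`
  obtain ⟨M, hM⟩ : ∃ M : ℕ, (4 : ℝ) ^ p * ∑' k, ‖z (k + M)‖ ^ p ≤ ε ^ p / 2 := by
    have h := (tendsto_sum_nat_add fun k => ‖z k‖ ^ p).const_mul ((4 : ℝ) ^ p)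
    rw [mul_zero] at h
    exact (h.eventually (ge_mem_nhds hεp)).exists
  obtain ⟨s, hs, hsz⟩ : ∃ s > 0, s ^ p * ∑' k, ‖z k‖ ^ p ≤ ε ^ p / 2 := by
    have h : Tendsto (fun s : ℝ => s ^ p * ∑' k, ‖z k‖ ^ p) (𝓝[>] 0) (𝓝 0) := by
      have h₀ := ((continuous_id.rpow_const fun _ => Or.inr hp₀.le).mul_const
        (∑' k, ‖z k‖ ^ p)).tendsto 0
      simpa [Real.zero_rpow hp₀.ne'] using h₀.mono_left nhdsWithin_le_nhds
    obtain ⟨s, hsz, hs⟩ := ((h.eventually (ge_mem_nhds hεp)).and self_mem_nhdsWithin).exists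
    exact ⟨s, hs, hsz⟩
  obtain ⟨N, hN⟩ := eventually_atTop.1 <| eventually_exists_hasSum_head_le hp hr hpr hz hx hmem
    (δ := s / (2 * (M + 1))) (by positivity) M
  set w : ℕ → ℝ := fun k => if k < M then s else 4
  have hw_head : ∀ k < M, w k = s := fun k hk => if_pos hk
  have hw_tail : ∀ k, M ≤ k → w k = 4 := fun k hk => if_neg hk.not_gt
  obtain ⟨hwz, hwzε⟩ := memLpSeq_smul_and_lpNorm_le (w := w) hp₀ hε.le hz hs.le
    (fun k hk => by rw [hw_head k hk, abs_of_pos hs])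
    (fun k hk => by rw [hw_tail k hk, abs_of_pos four_pos]) hsz hM
  refine ⟨_, hwz, hwzε, N, fun n hn => ?_⟩
  obtain ⟨a, ha, hax, hhead⟩ := hN n hn
  have hw : ∀ k, w k ≠ 0 := fun k => by
    rcases lt_or_ge k M with hk | hk
    · exact hw_head k hk ▸ hs.ne'
    · exact hw_tail k hk ▸ four_ne_zero
  refine mem_prConv_smul_of_hasSum hw (div_mem_lrBall_one hr ha (fun k hk => ?_) hw_tail) hax
  rw [hw_head k hk, abs_div, abs_of_pos hs, div_le_iff₀ hs]
  exact (hhead k hk).trans_eq (by ring)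

/-- A sequence is `(p,r)`-null iff for every `ε > 0` there are `z ∈ ℓ_p(X)` and `N` such
that `‖xₙ‖ ≤ ε` and `xₙ ∈ (p,r)-conv(z)` for all `n ≥ N`. -/
theorem prNull_iff [CompleteSpace X] (p r : ℝ) (hp : 1 ≤ p) (hr : 1 ≤ r)
    (hpr : 1 ≤ 1 / p + 1 / r) (x : ℕ → X) :
    IsPRNull p r x ↔
      ∀ ε > 0, ∃ z : ℕ → X, MemLpSeq p z ∧ ∃ N : ℕ, ∀ n ≥ N,
        ‖x n‖ ≤ ε ∧ x n ∈ prConv r z := by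
  have hr₀ : 0 < r := one_pos.trans_le hr
  constructor
  · intro h ε hε
    obtain ⟨z, hz, hzε, N, hN⟩ := h ε hε
    exact ⟨z, hz, N, fun n hn =>
      ⟨(norm_le_lpNorm_of_mem_prConv hp hr₀ hpr hz (hN n hn)).trans hzε, hN n hn⟩⟩
  · intro h
    obtain ⟨z, hz, N, hN⟩ := h 1 one_pos
    have hx : Tendsto x atTop (𝓝 0) := by
      refine Metric.tendsto_atTop.2 fun ε hε => ?_
      obtain ⟨_, _, M, hM⟩ := h (ε / 2) (half_pos hε)
      exact ⟨M, fun n hn => by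
        rw [dist_zero_right]; exact (hM n hn).1.trans_lt (half_lt_self hε)⟩
    exact isPRNull_of_tendsto_zero hp hr hpr hz hx
      (eventually_atTop.2 ⟨N, fun n hn => (hN n hn).2⟩)
end
end

section
/- Let T : Y → X be a bounded linear operator between Banach spaces, K a weakly compact subset of Y with 0 ∈ K, and (x_n) a weakly null sequence in X with x_n ∈ T(K) for all n. Let q : Y → Z := Y/ker T be the quotient map and T̄ : Z → X the induced injective operator with T = T̄ q. Then there exists a weakly null sequence (z_n) in Z with x_n = T̄ z_n for all n. -/
/-! The lifts `zₙ = q kₙ` (with `xₙ = T kₙ`, `kₙ ∈ K`) already work. They lie in the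
weakly compact set `q(K)`, so it suffices that each weak cluster point `c` of `(zₙ)` is `0`:
then `T̄ c` is a weak cluster point of `(xₙ)`, hence `T̄ c = 0` because the weak topology of
`X` is Hausdorff (Hahn–Banach), and `c = 0` by injectivity of `T̄`. -/

open Filter Topology Pointwise

noncomputable section

variable {X : Type*} [NormedAddCommGroup X] [NormedSpace ℝ X]

theorem IsCompact.tendsto_nhds_of_tendsto_comp {α β ι : Type*} [TopologicalSpace α]
    [TopologicalSpace β] [T2Space β] {f : α → β} (hf : Continuous f)
    (hf_inj : Function.Injective f) {S : Set α} (hS : IsCompact S) {l : Filter ι} {u : ι → α}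
    (hu : ∀ᶠ i in l, u i ∈ S) {c : α} (h : Tendsto (f ∘ u) l (𝓝 (f c))) :
    Tendsto u l (𝓝 c) :=
  hS.tendsto_nhds_of_unique_mapClusterPt hu fun _ _ hy =>
    hf_inj <| eq_of_nhds_neBot <| (hy.continuousAt_comp hf.continuousAt).clusterPt.mono h

theorem WeakSpace.tendsto_toWeakSpace_iff {𝕜 E ι : Type*} [CommSemiring 𝕜]
    [TopologicalSpace 𝕜] [ContinuousAdd 𝕜] [ContinuousConstSMul 𝕜 𝕜] [AddCommMonoid E]
    [Module 𝕜 E] [TopologicalSpace E] {l : Filter ι} {u : ι → E} {a : E} :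
    Tendsto (fun i => toWeakSpace 𝕜 E (u i)) l (𝓝 (toWeakSpace 𝕜 E a)) ↔
      ∀ f : E →L[𝕜] 𝕜, Tendsto (fun i => f (u i)) l (𝓝 (f a)) := by
  rw [← tendsto_pi_nhds]
  exact (IsInducing.induced _).tendsto_nhds_iff

theorem ContinuousLinearMap.weakly_tendsto_of_injective_of_isCompact {𝕜 E F ι : Type*}
    [RCLike 𝕜] [NormedAddCommGroup E] [NormedSpace 𝕜 E] [NormedAddCommGroup F]
    [NormedSpace 𝕜 F] (A : E →L[𝕜] F) (hA : Function.Injective A)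
    {S : Set (WeakSpace 𝕜 E)} (hS : IsCompact S)
    {l : Filter ι} {u : ι → E} (hu : ∀ᶠ i in l, toWeakSpace 𝕜 E (u i) ∈ S) {a : E}
    (h : ∀ f : F →L[𝕜] 𝕜, Tendsto (fun i => f (A (u i))) l (𝓝 (f (A a)))) :
    ∀ g : E →L[𝕜] 𝕜, Tendsto (fun i => g (u i)) l (𝓝 (g a)) := by
  have hAu : Tendsto (fun i => toWeakSpace 𝕜 F (A (u i))) l (𝓝 (toWeakSpace 𝕜 F (A a))) :=
    WeakSpace.tendsto_toWeakSpace_iff.2 h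
  exact WeakSpace.tendsto_toWeakSpace_iff.1 <|
    hS.tendsto_nhds_of_tendsto_comp (WeakSpace.map A).continuous hA hu hAu

theorem weakly_null_lifts_general {Y Z : Type*} [NormedAddCommGroup Y]
    [NormedSpace ℝ Y] [NormedAddCommGroup Z] [NormedSpace ℝ Z]
    (T : Y →L[ℝ] X) (q : Y →L[ℝ] Z) (Tbar : Z →L[ℝ] X)
    (hTbar : Function.Injective Tbar)
    (hfact : ∀ v, T v = Tbar (q v)) (K : Set Y) (hK : IsCompact (toWeakSpace ℝ Y '' K))
    (x : ℕ → X) (hxK : ∀ n, x n ∈ T '' K)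
    (hx : ∀ f : X →L[ℝ] ℝ, Tendsto (fun n => f (x n)) atTop (nhds 0)) :
    ∃ z : ℕ → Z, (∀ g : Z →L[ℝ] ℝ, Tendsto (fun n => g (z n)) atTop (nhds 0)) ∧
      ∀ n, x n = Tbar (z n) := by
  choose k hkK hkx using hxK
  refine ⟨fun n => q (k n), fun g => ?_, fun n => by rw [← hkx n, hfact]⟩
  set qK := WeakSpace.map q '' (toWeakSpace ℝ Y '' K)
  have hqK : IsCompact qK := hK.image (WeakSpace.map q).continuous
  have hqk_mem : ∀ᶠ n in atTop, toWeakSpace ℝ Z (q (k n)) ∈ qK :=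
    Eventually.of_forall fun n => ⟨_, ⟨k n, hkK n, rfl⟩, rfl⟩
  have hTbar_qk : ∀ f : X →L[ℝ] ℝ,
      Tendsto (fun n => f (Tbar (q (k n)))) atTop (𝓝 (f (Tbar 0))) := by
    simpa [← hfact, hkx] using hx
  simpa using Tbar.weakly_tendsto_of_injective_of_isCompact hTbar hqK hqk_mem hTbar_qk g

/-- Key step of Proposition 4.4(b): if `T = T̄ ∘ q` with `q` the (surjective) quotient map
and `T̄` injective, `K` weakly compact with `0 ∈ K`, and `(xₙ)` weakly null with
`xₙ ∈ T(K)`, then there is a weakly null sequence `(zₙ)` with `xₙ = T̄ zₙ`. -/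
theorem weakly_null_lifts [CompleteSpace X] {Y Z : Type*} [NormedAddCommGroup Y]
    [NormedSpace ℝ Y] [CompleteSpace Y] [NormedAddCommGroup Z] [NormedSpace ℝ Z]
    [CompleteSpace Z] (T : Y →L[ℝ] X) (q : Y →L[ℝ] Z) (Tbar : Z →L[ℝ] X)
    (hq : Function.Surjective q) (hTbar : Function.Injective Tbar)
    (hfact : ∀ v, T v = Tbar (q v)) (K : Set Y) (hK : IsCompact (toWeakSpace ℝ Y '' K))
    (h0K : (0 : Y) ∈ K) (x : ℕ → X) (hxK : ∀ n, x n ∈ T '' K)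
    (hx : ∀ f : X →L[ℝ] ℝ, Tendsto (fun n => f (x n)) atTop (nhds 0)) :
    ∃ z : ℕ → Z, (∀ g : Z →L[ℝ] ℝ, Tendsto (fun n => g (z n)) atTop (nhds 0)) ∧
      ∀ n, x n = Tbar (z n) :=
  weakly_null_lifts_general T q Tbar hTbar hfact K hK x hxK hx
end
end

section
/- If (x_n) and (y_n) are (p,r)-null sequences in X with 1 ≤ r ≤ p < ∞ and r ≤ p*, then (x_n + y_n) is (p,r)-null. -/
open Filter Topology Pointwise

noncomputable section

variable {X : Type*} [NormedAddCommGroup X] [NormedSpace ℝ X]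

set_option maxHeartbeats 4000000 in
/-- The sum of two `(p,r)`-null sequences is `(p,r)`-null when `r ≤ p` (and `r ≤ p*`). -/
theorem prNull_add [CompleteSpace X] (p r : ℝ) (hp : 1 ≤ p) (hr : 1 ≤ r) (hrp : r ≤ p)
    (hpr : 1 ≤ 1 / p + 1 / r) (x y : ℕ → X) (hx : IsPRNull p r x)
    (hy : IsPRNull p r y) : IsPRNull p r (fun n => x n + y n) := by
  intro ε hε
  have hp0 : (0:ℝ) < p := lt_of_lt_of_le one_pos hp
  have hr0 : (0:ℝ) < r := lt_of_lt_of_le one_pos hr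
  obtain ⟨z, hz1, hz2, N1, hN1⟩ := hx (ε/4) (by positivity)
  obtain ⟨w, hw1, hw2, N2, hN2⟩ := hy (ε/4) (by positivity)
  set t : ℝ := (2:ℝ) ^ (1/r) with ht
  have ht0 : 0 < t := Real.rpow_pos_of_pos two_pos _
  have htr : t ^ r = 2 := by
    rw [ht, ← Real.rpow_mul (by norm_num : (0:ℝ) ≤ 2), one_div_mul_cancel hr0.ne',
      Real.rpow_one]
  have ht2 : t ≤ 2 := by
    calc t ≤ (2:ℝ) ^ (1:ℝ) := by
            apply Real.rpow_le_rpow_of_exponent_le one_le_two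
            rw [div_le_one hr0]; exact hr
      _ = 2 := Real.rpow_one 2
  set v : ℕ → X := fun k => if k % 2 = 0 then z (k/2) else w (k/2) with hv
  set u : ℕ → X := fun k => t • v k with hu
  have hue : ∀ k, u (2*k) = t • z k := by
    intro k
    have h1 : (2*k) % 2 = 0 := by omega
    have h2 : (2*k) / 2 = k := by omega
    simp [hu, hv, h1, h2]
  have huo : ∀ k, u (2*k+1) = t • w k := by
    intro k
    have h1 : (2*k+1) % 2 ≠ 0 := by omega
    have h2 : (2*k+1) / 2 = k := by omega
    simp [hu, hv, h1, h2]
  have hnorm : ∀ (ξ : X), ‖t • ξ‖ ^ p = t ^ p * ‖ξ‖ ^ p := by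
    intro ξ
    rw [norm_smul, Real.norm_of_nonneg ht0.le, Real.mul_rpow ht0.le (norm_nonneg _)]
  clear_value v u
  have hse : Summable fun k => ‖u (2*k)‖ ^ p := by
    apply Summable.congr (hz1.mul_left (t ^ p))
    intro k; rw [hue k, hnorm]
  have hso : Summable fun k => ‖u (2*k+1)‖ ^ p := by
    apply Summable.congr (hw1.mul_left (t ^ p))
    intro k; rw [huo k, hnorm]
  have hu1 : MemLpSeq p u := Summable.even_add_odd (f := fun k => ‖u k‖ ^ p) hse hso
  -- norm bound
  have hSz : (0:ℝ) ≤ ∑' k, ‖z k‖ ^ p := tsum_nonneg fun k => by positivity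
  have hSw : (0:ℝ) ≤ ∑' k, ‖w k‖ ^ p := tsum_nonneg fun k => by positivity
  have hzb : (∑' k, ‖z k‖ ^ p) ≤ (ε/4) ^ p := by
    have h0 : (0:ℝ) ≤ lpNorm p z := by rw [lpNorm]; positivity
    have := Real.rpow_le_rpow h0 hz2 hp0.le
    rwa [lpNorm, one_div, Real.rpow_inv_rpow hSz hp0.ne'] at this
  have hwb : (∑' k, ‖w k‖ ^ p) ≤ (ε/4) ^ p := by
    have h0 : (0:ℝ) ≤ lpNorm p w := by rw [lpNorm]; positivity
    have := Real.rpow_le_rpow h0 hw2 hp0.le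
    rwa [lpNorm, one_div, Real.rpow_inv_rpow hSw hp0.ne'] at this
  have e1 : (∑' k, ‖u (2*k)‖ ^ p) = t ^ p * (∑' k, ‖z k‖ ^ p) := by
    calc (∑' k, ‖u (2*k)‖ ^ p) = ∑' k, t ^ p * ‖z k‖ ^ p :=
          tsum_congr fun k => by rw [hue k, hnorm]
      _ = t ^ p * ∑' k, ‖z k‖ ^ p := tsum_mul_left
  have e2 : (∑' k, ‖u (2*k+1)‖ ^ p) = t ^ p * (∑' k, ‖w k‖ ^ p) := by
    calc (∑' k, ‖u (2*k+1)‖ ^ p) = ∑' k, t ^ p * ‖w k‖ ^ p :=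
          tsum_congr fun k => by rw [huo k, hnorm]
      _ = t ^ p * ∑' k, ‖w k‖ ^ p := tsum_mul_left
  have htsum : (∑' k, ‖u k‖ ^ p) = t ^ p * (∑' k, ‖z k‖ ^ p) + t ^ p * (∑' k, ‖w k‖ ^ p) :=
    ((HasSum.even_add_odd (f := fun k => ‖u k‖ ^ p) hse.hasSum hso.hasSum).tsum_eq).trans (by rw [e1, e2])
  have hu2 : lpNorm p u ≤ ε := by
    have key : (∑' k, ‖u k‖ ^ p) ≤ ε ^ p := by
      rw [htsum]
      have htp : t ^ p ≤ 2 ^ p := Real.rpow_le_rpow ht0.le ht2 hp0.le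
      have h2p : (2:ℝ) ≤ 2 ^ p := by
        calc (2:ℝ) = 2 ^ (1:ℝ) := (Real.rpow_one 2).symm
          _ ≤ 2 ^ p := Real.rpow_le_rpow_of_exponent_le one_le_two hp
      have hεp : ε ^ p = 2 ^ p * (2 ^ p * (ε/4) ^ p) := by
        rw [← Real.mul_rpow (by positivity) (by positivity),
          ← Real.mul_rpow (by positivity) (by positivity)]
        congr 1
        ring
      rw [hεp]
      have h1 : t ^ p * (∑' k, ‖z k‖ ^ p) ≤ 2 ^ p * (ε/4) ^ p :=
        mul_le_mul htp hzb hSz (by positivity)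
      have h2 : t ^ p * (∑' k, ‖w k‖ ^ p) ≤ 2 ^ p * (ε/4) ^ p :=
        mul_le_mul htp hwb hSw (by positivity)
      have h3 : 2 * (2 ^ p * (ε/4) ^ p) ≤ 2 ^ p * (2 ^ p * (ε/4) ^ p) := by
        apply mul_le_mul_of_nonneg_right h2p
        positivity
      linarith
    have hfin := Real.rpow_le_rpow (tsum_nonneg fun k : ℕ => by positivity :
      (0:ℝ) ≤ ∑' k, ‖u k‖ ^ p) key (by positivity : (0:ℝ) ≤ 1/p)
    rw [one_div, Real.rpow_rpow_inv hε.le hp0.ne'] at hfin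
    rw [lpNorm, one_div]
    exact hfin
  refine ⟨u, hu1, hu2, max N1 N2, fun n hn => ?_⟩
  obtain ⟨a, ha1, ha2, ha3⟩ := hN1 n (le_trans (le_max_left _ _) hn)
  obtain ⟨b, hb1, hb2, hb3⟩ := hN2 n (le_trans (le_max_right _ _) hn)
  set c : ℕ → ℝ := fun k => (if k % 2 = 0 then a (k/2) else b (k/2)) / t with hc
  have hce : ∀ k, c (2*k) = a k / t := by
    intro k
    have h1 : (2*k) % 2 = 0 := by omega
    have h2 : (2*k) / 2 = k := by omega
    simp [hc, h1, h2]
  have hco : ∀ k, c (2*k+1) = b k / t := by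
    intro k
    have h1 : (2*k+1) % 2 ≠ 0 := by omega
    have h2 : (2*k+1) / 2 = k := by omega
    simp [hc, h1, h2]
  clear_value c
  have habs : ∀ s : ℝ, |s / t| ^ r = |s| ^ r / 2 := by
    intro s
    rw [abs_div, abs_of_pos ht0, Real.div_rpow (abs_nonneg s) ht0.le, htr]
  have hcse : Summable fun k => |c (2*k)| ^ r := by
    apply Summable.congr (ha1.div_const 2)
    intro k; rw [hce k, habs]
  have hcso : Summable fun k => |c (2*k+1)| ^ r := by
    apply Summable.congr (hb1.div_const 2)
    intro k; rw [hco k, habs]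
  have csum : Summable fun k => |c k| ^ r := Summable.even_add_odd (f := fun k => |c k| ^ r) hcse hcso
  have cbnd : (∑' k, |c k| ^ r) ≤ 1 := by
    have hteq : (∑' k, |c k| ^ r) = (∑' k, |c (2*k)| ^ r) + ∑' k, |c (2*k+1)| ^ r :=
      (HasSum.even_add_odd (f := fun k => |c k| ^ r) hcse.hasSum hcso.hasSum).tsum_eq
    have f1 : (∑' k, |c (2*k)| ^ r) = (∑' k, |a k| ^ r) / 2 := by
      calc (∑' k, |c (2*k)| ^ r) = ∑' k, |a k| ^ r / 2 :=
            tsum_congr fun k => by rw [hce k, habs]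
        _ = (∑' k, |a k| ^ r) / 2 := tsum_div_const
    have f2 : (∑' k, |c (2*k+1)| ^ r) = (∑' k, |b k| ^ r) / 2 := by
      calc (∑' k, |c (2*k+1)| ^ r) = ∑' k, |b k| ^ r / 2 :=
            tsum_congr fun k => by rw [hco k, habs]
        _ = (∑' k, |b k| ^ r) / 2 := tsum_div_const
    rw [hteq, f1, f2]; linarith
  have he : HasSum (fun k => c (2*k) • u (2*k)) (x n) := by
    apply HasSum.congr_fun ha3
    intro k; rw [hce k, hue k, smul_smul, div_mul_cancel₀ _ ht0.ne']
  have ho : HasSum (fun k => c (2*k+1) • u (2*k+1)) (y n) := by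
    apply HasSum.congr_fun hb3
    intro k; rw [hco k, huo k, smul_smul, div_mul_cancel₀ _ ht0.ne']
  exact ⟨c, csum, cbnd, HasSum.even_add_odd (f := fun k => c k • u k) he ho⟩
end
end
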